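/- With the CGMY data below, there exist w₀ > 0 and η > 0 such that for all w > w₀, |Re(θ₀(w) - ψ₀(w))| ≤ max(η·w^{Y-1}, |κ|). -/

import Mathlib

/-!
For `w ≠ 0`, `θ₀(w) = C·Γ(-Y)·Re((i w)^Y + (-i w)^Y)`: both powers have real part
`|w|^Y cos(πY/2)`, and `cos(πY/2) < 0` for `Y ∈ (1,2)` accounts for the absolute value in `σ_Y`.
On the other hand `Re ψ₀(w) = κ + C·Γ(-Y)·Re((M̃ - i w)^Y + (G̃ + i w)^Y)`. The mean value
theorem on the horizontal segment from `i s` to `a + i s` (which avoids the branch cut since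
`s ≠ 0`) gives `‖(a + i s)^Y - (i s)^Y‖ ≤ Y |a| (|a| + |s|)^(Y-1)`, so
`|θ₀(w) - Re ψ₀(w)| ≤ |κ| + O(w^(Y-1))`, and `|κ| ≤ |κ| w^(Y-1)` once `w ≥ 1`.
-/

open MeasureTheory Filter Topology Complex

/-- The stable scale coefficient `σ_Y = 2·C·Γ(-Y)·|cos(πY/2)|`. -/
noncomputable def sigmaY (C Y : ℝ) : ℝ :=
  2 * C * Real.Gamma (-Y) * |Real.cos (Real.pi * Y / 2)|

/-- The martingale drift `b̃`. -/
noncomputable def btilde (C G M Y : ℝ) : ℝ :=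
  -(C * Real.Gamma (-Y) * ((M - 1) ^ Y + (G + 1) ^ Y - M ^ Y - G ^ Y))

/-- The constant `κ = b̃/2 - C·Γ(-Y)·(M^Y + G^Y)`. -/
noncomputable def kappaC (C G M Y : ℝ) : ℝ :=
  btilde C G M Y / 2 - C * Real.Gamma (-Y) * (M ^ Y + G ^ Y)

/-- The limiting stable exponent `θ₀(u) = -σ_Y·|u|^Y`. -/
noncomputable def theta0 (C Y : ℝ) (u : ℝ) : ℝ :=
  -(sigmaY C Y) * |u| ^ Y

/-- The contour-shifted characteristic exponent `ψ₀`. -/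
noncomputable def psi0 (C G M Y : ℝ) (v : ℝ) : ℂ :=
  Complex.I * (v : ℂ) * ((btilde C G M Y : ℝ) : ℂ) + ((kappaC C G M Y : ℝ) : ℂ)
    + ((C * Real.Gamma (-Y) : ℝ) : ℂ) *
      ((((M - 1/2 : ℝ) : ℂ) - Complex.I * (v : ℂ)) ^ (Y : ℂ)
        + (((G + 1/2 : ℝ) : ℂ) + Complex.I * (v : ℂ)) ^ (Y : ℂ))

/-- The rescaled exponent `θ(t,v)` in the Lipton–Lewis representation. -/
noncomputable def thetaT (C G M Y : ℝ) (t v : ℝ) : ℂ :=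
  Complex.I * (v : ℂ) * ((btilde C G M Y : ℝ) : ℂ) * ((t ^ (1 - 1/Y) : ℝ) : ℂ)
    + ((kappaC C G M Y : ℝ) : ℂ) * (t : ℂ)
    + ((C * Real.Gamma (-Y) : ℝ) : ℂ) *
      (((((M - 1/2) * t ^ (1/Y) : ℝ) : ℂ) - Complex.I * (v : ℂ)) ^ (Y : ℂ)
        + ((((G + 1/2) * t ^ (1/Y) : ℝ) : ℂ) + Complex.I * (v : ℂ)) ^ (Y : ℂ))

/-- The normalized Lipton–Lewis ATM factor `L(t)`. -/
noncomputable def LLfn (C G M Y : ℝ) (t : ℝ) : ℝ :=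
  (1 / Real.pi) *
    (∫ v in Set.Ioi (0 : ℝ),
      (1 - Complex.exp (thetaT C G M Y t v)) / (((v ^ 2 + t ^ (2/Y) / 4 : ℝ)) : ℂ)).re

/-- The first-order coefficient `d₁`. -/
noncomputable def dOne (C Y : ℝ) : ℝ :=
  (1 / Real.pi) * Real.Gamma (1 - 1/Y) * (sigmaY C Y) ^ (1/Y)

/-- The second-order coefficient `d₂`. -/
noncomputable def dTwo (C G M Y : ℝ) : ℝ :=
  (1 / Real.pi) * ∫ w in Set.Ioi (0 : ℝ),
    ((w ^ 2 + 1/4) * theta0 C Y w - w ^ 2 * (psi0 C G M Y w).re) / (w ^ 2 * (w ^ 2 + 1/4))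

lemma re_cpow_I_mul_ofReal {x : ℝ} (hx : x ≠ 0) (y : ℝ) :
    ((I * x) ^ (y : ℂ)).re = |x| ^ y * Real.cos (y * Real.pi / 2) := by
  rw [cpow_ofReal_re, norm_mul, norm_I, one_mul, norm_real, Real.norm_eq_abs]
  congr 1
  rcases hx.lt_or_gt with hneg | hpos
  · rw [show I * (x : ℂ) = ((-x : ℝ) : ℂ) * -I by push_cast; ring,
      arg_real_mul _ (neg_pos.2 hneg), arg_neg_I, ← Real.cos_neg]
    ring_nf
  · rw [mul_comm I, arg_real_mul _ hpos, arg_I]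
    ring_nf

lemma norm_cpow_add_I_mul_sub_le {y : ℝ} (hy : 1 ≤ y) (a : ℝ) {s : ℝ} (hs : s ≠ 0) :
    ‖((a : ℂ) + I * s) ^ (y : ℂ) - (I * s) ^ (y : ℂ)‖ ≤ y * |a| * (|a| + |s|) ^ (y - 1) := by
  set z : ℝ → ℂ := fun t => a * t + I * s
  have hderiv (t : ℝ) :
      HasDerivAt (fun t => z t ^ (y : ℂ)) (y * z t ^ ((y : ℂ) - 1) * a) t := by
    have hz : HasDerivAt (fun u : ℂ => a * u + I * s) a t := by
      simpa using ((hasDerivAt_id (t : ℂ)).const_mul (a : ℂ)).add_const (I * s)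
    exact (hz.cpow_const (mem_slitPlane_iff.2 (Or.inr (by simpa using hs)))).comp_ofReal
  have hbound : ∀ t ∈ Set.Ico (0 : ℝ) 1,
      ‖y * z t ^ ((y : ℂ) - 1) * a‖ ≤ y * |a| * (|a| + |s|) ^ (y - 1) := by
    intro t ht
    have hz : ‖z t‖ ≤ |a| + |s| := by
      refine (norm_le_abs_re_add_abs_im _).trans ?_
      have : |a * t| ≤ |a| := by
        rw [abs_mul, abs_of_nonneg ht.1]
        exact mul_le_of_le_one_right (abs_nonneg a) ht.2.le
      simpa [z] using this
    rw [show (y : ℂ) - 1 = ((y - 1 : ℝ) : ℂ) by push_cast; ring, norm_mul, norm_mul,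
      norm_cpow_real, norm_real, norm_real, Real.norm_eq_abs, Real.norm_eq_abs,
      abs_of_nonneg (by linarith : (0 : ℝ) ≤ y), mul_right_comm]
    gcongr
  simpa [z] using norm_image_sub_le_of_norm_deriv_le_segment'
    (fun t _ => (hderiv t).hasDerivWithinAt) hbound 1 (by norm_num)

lemma theta0_eq_re_cpow (C : ℝ) {Y : ℝ} (hY1 : 1 < Y) (hY2 : Y < 2) {w : ℝ} (hw : w ≠ 0) :
    theta0 C Y w = C * Real.Gamma (-Y) *
      (((I * (-w : ℝ)) ^ (Y : ℂ)).re + ((I * w) ^ (Y : ℂ)).re) := by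
  have hcos : Real.cos (Real.pi * Y / 2) < 0 :=
    Real.cos_neg_of_pi_div_two_lt_of_lt (by nlinarith [Real.pi_pos]) (by nlinarith [Real.pi_pos])
  rw [re_cpow_I_mul_ofReal (neg_ne_zero.2 hw), re_cpow_I_mul_ofReal hw, abs_neg, theta0, sigmaY,
    abs_of_neg hcos]
  ring_nf

lemma psi0_re (C G M Y w : ℝ) :
    (psi0 C G M Y w).re = kappaC C G M Y + C * Real.Gamma (-Y) *
      (((((M - 1/2 : ℝ) : ℂ) + I * (-w : ℝ)) ^ (Y : ℂ)).re
        + ((((G + 1/2 : ℝ) : ℂ) + I * w) ^ (Y : ℂ)).re) := by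
  rw [psi0, ofReal_neg, mul_neg, ← sub_eq_add_neg]
  simp only [add_re, mul_re, I_re, I_im, ofReal_re, ofReal_im]
  ring

lemma abs_theta0_sub_psi0_re_le (C G M : ℝ) {Y : ℝ} (hY1 : 1 < Y) (hY2 : Y < 2) {w : ℝ}
    (hw : w ≠ 0) :
    |theta0 C Y w - (psi0 C G M Y w).re| ≤ |kappaC C G M Y| + |C * Real.Gamma (-Y)| * Y *
      (|M - 1/2| + |G + 1/2|) * (|M - 1/2| + |G + 1/2| + |w|) ^ (Y - 1) := by
  set S := |M - 1/2| + |G + 1/2|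
  have hterm (a s : ℝ) (hs : s ≠ 0) (ha : |a| ≤ S) :
      |((I * s) ^ (Y : ℂ)).re - (((a : ℂ) + I * s) ^ (Y : ℂ)).re| ≤ Y * |a| * (S + |s|) ^ (Y - 1) :=
    calc _ ≤ ‖((a : ℂ) + I * s) ^ (Y : ℂ) - (I * s) ^ (Y : ℂ)‖ := by
          rw [abs_sub_comm, ← sub_re]; exact abs_re_le_norm _
      _ ≤ Y * |a| * (|a| + |s|) ^ (Y - 1) := norm_cpow_add_I_mul_sub_le hY1.le a hs
      _ ≤ Y * |a| * (S + |s|) ^ (Y - 1) := by gcongr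
  have hMterm := hterm (M - 1/2) (-w) (neg_ne_zero.2 hw) (le_add_of_nonneg_right (abs_nonneg _))
  have hGterm := hterm (G + 1/2) w hw (le_add_of_nonneg_left (abs_nonneg _))
  rw [abs_neg] at hMterm
  rw [theta0_eq_re_cpow C hY1 hY2 hw, psi0_re]
  calc _ = |-kappaC C G M Y + C * Real.Gamma (-Y) *
        ((((I * (-w : ℝ)) ^ (Y : ℂ)).re - ((((M - 1/2 : ℝ) : ℂ) + I * (-w : ℝ)) ^ (Y : ℂ)).re)
          + (((I * w) ^ (Y : ℂ)).re - ((((G + 1/2 : ℝ) : ℂ) + I * w) ^ (Y : ℂ)).re))| := by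
        ring_nf
    _ ≤ |kappaC C G M Y| + |C * Real.Gamma (-Y)| *
        (Y * |M - 1/2| * (S + |w|) ^ (Y - 1) + Y * |G + 1/2| * (S + |w|) ^ (Y - 1)) := by
        refine (abs_add_le _ _).trans ?_
        rw [abs_neg, abs_mul]
        gcongr
        exact (abs_add_le _ _).trans (add_le_add hMterm hGterm)
    _ = _ := by ring

theorem stmt6_general (C G M Y : ℝ)
    (hY1 : 1 < Y) (hY2 : Y < 2) :
    ∃ w₀ > (0 : ℝ), ∃ η > (0 : ℝ), ∀ w : ℝ, w₀ < w →
      |theta0 C Y w - (psi0 C G M Y w).re| ≤ max (η * w ^ (Y - 1)) |kappaC C G M Y| := by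
  set S := |M - 1/2| + |G + 1/2|
  set B := |C * Real.Gamma (-Y)| * Y * S
  have hS : 0 ≤ S := by positivity
  have hB : 0 ≤ B := by positivity
  refine ⟨S + 1, by positivity, |kappaC C G M Y| + B * 2 ^ (Y - 1) + 1, by positivity,
    fun w hw => le_max_of_le_left ?_⟩
  have hw1 : 1 ≤ w := by linarith
  have hpow : 1 ≤ w ^ (Y - 1) := Real.one_le_rpow hw1 (by linarith)
  have hSw : (S + |w|) ^ (Y - 1) ≤ 2 ^ (Y - 1) * w ^ (Y - 1) := by
    rw [abs_of_pos (by linarith), ← Real.mul_rpow zero_le_two (by linarith)]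
    gcongr
    linarith
  calc _ ≤ |kappaC C G M Y| + B * (S + |w|) ^ (Y - 1) :=
        abs_theta0_sub_psi0_re_le C G M hY1 hY2 (by linarith)
    _ ≤ |kappaC C G M Y| * w ^ (Y - 1) + B * (2 ^ (Y - 1) * w ^ (Y - 1)) :=
        add_le_add (le_mul_of_one_le_right (abs_nonneg _) hpow) (mul_le_mul_of_nonneg_left hSw hB)
    _ ≤ (|kappaC C G M Y| + B * 2 ^ (Y - 1) + 1) * w ^ (Y - 1) := by linarith

/-- There exist `w₀ > 0` and `η > 0` such that for all `w > w₀`,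
`|Re(θ₀(w) - ψ₀(w))| ≤ max(η·w^{Y-1}, |κ|)`. -/
theorem stmt6 (C G M Y : ℝ) (hC : 0 < C) (hG : 0 ≤ G) (hM : 1 < M)
    (hY1 : 1 < Y) (hY2 : Y < 2) :
    ∃ w₀ > (0 : ℝ), ∃ η > (0 : ℝ), ∀ w : ℝ, w₀ < w →
      |theta0 C Y w - (psi0 C G M Y w).re| ≤ max (η * w ^ (Y - 1)) |kappaC C G M Y| :=
  stmt6_general C G M Y hY1 hY2
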